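/- arXiv:2309.02841 — 3 statements merged into one kernel-verified Lean document; each statement's English description precedes it below -/
import Mathlib

section
/- Let k ≥ 2 and n ≥ 2, let A be the directed adjacency matrix of the corresponding graph G_k^n, and let u, v be vertices of G_k^n such that the last letter of u is different from the first letter of v. Then the (u,v) entry of A^(n-1) equals 1 and the (u,v) entry of A^(n-2) equals 0 (i.e., there is exactly one directed path of length n-1 from u to v and no directed path of length n-2 from u to v). -/
/-- A word `w` of length `m` over the alphabet `Fin k` is adjacency-hopping if
`w i ≠ w (i+1)` for all `i` with `i + 1 < m`. -/
def IsAdjHop (k m : ℕ) (w : Fin m → Fin k) : Prop :=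
  ∀ i : ℕ, (h : i + 1 < m) → w ⟨i, by omega⟩ ≠ w ⟨i + 1, h⟩

/-- The vertex set of the corresponding graph `G_k^n`: all adjacency-hopping words of
length `n - 1` over `Fin k`. -/
abbrev Vtx (k n : ℕ) : Type := {w : Fin (n - 1) → Fin k // IsAdjHop k (n - 1) w}

/-- The edge relation of `G_k^n`: there is an edge from `u` to `v` iff `v j = u (j+1)`
for all `j` with `j + 1 ≤ n - 2`, and the last letter of `u` differs from the last
letter of `v`. -/
def Edge (k n : ℕ) (u v : Vtx k n) : Prop :=
  (∀ j : ℕ, (h : j + 1 ≤ n - 2) → v.1 ⟨j, by omega⟩ = u.1 ⟨j + 1, by omega⟩) ∧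
  ∀ h : n - 2 < n - 1, u.1 ⟨n - 2, h⟩ ≠ v.1 ⟨n - 2, h⟩

noncomputable instance (k n : ℕ) : Fintype (Vtx k n) := Fintype.ofFinite _

open Classical in
/-- The directed adjacency matrix of `G_k^n` over `ℚ`. -/
noncomputable def AdjMat (k n : ℕ) : Matrix (Vtx k n) (Vtx k n) ℚ :=
  Matrix.of fun u v => if Edge k n u v then 1 else 0

/-!
The vertices of a walk of length `t` from `u` to `v` are the consecutive windows of length
`n - 1` of the word `u₀ ⋯ u_{n-2} v_{n-1-t} ⋯ v_{n-2}`, which is adjacency-hopping exactly when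
`v` continues the `t`-shift of `u` and the junction `u_{n-2} v_{n-1-t}` is not a repeated letter.
For `t ≤ n - 1` the window after each step is determined by `u` and `v`, so `(Aᵗ)ᵤᵥ` is `1` or
`0` according to this condition. For `t = n - 1` the overlap is empty and only the junction
`u_{n-2} ≠ v₀` remains; for `t = n - 2` the overlap demands `v₀ = u_{n-2}`.
-/

theorem word_congr {k m : ℕ} (w : Fin m → Fin k) {a b : ℕ} {ha : a < m} {hb : b < m}
    (h : a = b) : w ⟨a, ha⟩ = w ⟨b, hb⟩ := by
  subst h; rfl

namespace Vtx

variable {k n t : ℕ} {u v w : Vtx k n}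

-- Only meaningful for `t ≤ n - 1`: beyond that, `n - 1 - t` truncates to `0`.
def ShiftJoin (t : ℕ) (u v : Vtx k n) : Prop :=
  (∀ j : ℕ, (h : j + t < n - 1) → v.1 ⟨j, by omega⟩ = u.1 ⟨j + t, h⟩) ∧
  ∀ (_ : 0 < t) (h : n - 2 < n - 1), u.1 ⟨n - 2, h⟩ ≠ v.1 ⟨n - 1 - t, by omega⟩

theorem shiftJoin_zero_iff : ShiftJoin 0 u v ↔ u = v := by
  constructor
  · rintro ⟨hshift, -⟩
    exact Subtype.ext (funext fun j => (hshift j.1 j.2).symm)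
  · rintro rfl
    exact ⟨fun j h => rfl, fun h0 => absurd h0 (lt_irrefl 0)⟩

theorem ShiftJoin.succ (ht : t + 1 ≤ n - 1) (hw : ShiftJoin t u w) (he : Edge k n w v) :
    ShiftJoin (t + 1) u v := by
  refine ⟨fun j hj => ?_, fun _ h hc => ?_⟩
  · calc v.1 ⟨j, _⟩ = w.1 ⟨j + 1, _⟩ := he.1 j (by omega)
      _ = u.1 ⟨j + 1 + t, _⟩ := hw.1 (j + 1) (by omega)
      _ = u.1 ⟨j + (t + 1), hj⟩ := word_congr u.1 (by omega)
  · rcases Nat.eq_zero_or_pos t with rfl | hpos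
    · apply he.2 h
      calc w.1 ⟨n - 2, h⟩ = u.1 ⟨n - 2 + 0, _⟩ := hw.1 (n - 2) (by omega)
        _ = v.1 ⟨n - 1 - (0 + 1), _⟩ := (word_congr u.1 (by omega)).trans hc
        _ = v.1 ⟨n - 2, h⟩ := word_congr v.1 (by omega)
    · apply hw.2 hpos h
      calc u.1 ⟨n - 2, h⟩ = v.1 ⟨n - 1 - (t + 1), _⟩ := hc
        _ = w.1 ⟨n - 1 - (t + 1) + 1, _⟩ := he.1 (n - 1 - (t + 1)) (by omega)
        _ = w.1 ⟨n - 1 - t, _⟩ := word_congr w.1 (by omega)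

/-- The window after `t` steps of a walk of length `t + 1` from `u` to `v`. -/
def midWord (t : ℕ) (u v : Vtx k n) : Fin (n - 1) → Fin k :=
  fun j => if h : j.1 + t < n - 1 then u.1 ⟨j.1 + t, h⟩ else v.1 ⟨j.1 - 1, by omega⟩

theorem midWord_of_lt {j : ℕ} {hj : j < n - 1} (h : j + t < n - 1) :
    midWord t u v ⟨j, hj⟩ = u.1 ⟨j + t, h⟩ :=
  dif_pos h

theorem midWord_of_not_lt {j : ℕ} {hj : j < n - 1} (h : ¬ j + t < n - 1)
    {h' : j - 1 < n - 1} : midWord t u v ⟨j, hj⟩ = v.1 ⟨j - 1, h'⟩ :=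
  dif_neg h

theorem isAdjHop_midWord (ht : t + 1 ≤ n - 1) (hQ : ShiftJoin (t + 1) u v) :
    IsAdjHop k (n - 1) (midWord t u v) := by
  intro i hi
  by_cases hnext : i + 1 + t < n - 1
  · rw [midWord_of_lt (by omega), midWord_of_lt hnext]
    exact fun hc => u.2 (i + t) (by omega) (hc.trans (word_congr u.1 (by omega)))
  by_cases hcur : i + t < n - 1
  · rw [midWord_of_lt hcur, midWord_of_not_lt hnext (h' := by omega)]
    exact fun hc => hQ.2 (by omega) (by omega)
      ((word_congr u.1 (by omega)).trans (hc.trans (word_congr v.1 (by omega))))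
  · rw [midWord_of_not_lt hcur (h' := by omega), midWord_of_not_lt hnext (h' := by omega)]
    exact fun hc => v.2 (i - 1) (by omega) (hc.trans (word_congr v.1 (by omega)))

theorem shiftJoin_midWord (ht : t + 1 ≤ n - 1) (hQ : ShiftJoin (t + 1) u v) :
    ShiftJoin t u ⟨midWord t u v, isAdjHop_midWord ht hQ⟩ := by
  refine ⟨fun j hj => midWord_of_lt hj, fun hpos h => ?_⟩
  dsimp only
  rw [midWord_of_not_lt (by omega) (h' := by omega)]
  exact fun hc => hQ.2 (by omega) h (hc.trans (word_congr v.1 (by omega)))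

theorem edge_midWord (ht : t + 1 ≤ n - 1) (hQ : ShiftJoin (t + 1) u v) :
    Edge k n ⟨midWord t u v, isAdjHop_midWord ht hQ⟩ v := by
  refine ⟨fun j hj => ?_, fun h => ?_⟩ <;> dsimp only
  · by_cases hc : j + 1 + t < n - 1
    · rw [midWord_of_lt hc]
      exact (hQ.1 j (by omega)).trans (word_congr u.1 (by omega))
    · rw [midWord_of_not_lt hc (h' := by omega)]
      exact word_congr v.1 (by omega)
  · rcases Nat.eq_zero_or_pos t with rfl | hpos
    · rw [midWord_of_lt (by omega)]
      exact fun hc => hQ.2 (by omega) h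
        ((word_congr u.1 (by omega)).trans (hc.trans (word_congr v.1 (by omega))))
    · rw [midWord_of_not_lt (by omega) (h' := by omega)]
      exact fun hc => v.2 (n - 3) (by omega)
        ((word_congr v.1 (by omega)).trans (hc.trans (word_congr v.1 (by omega))))

theorem eq_midWord (ht : t + 1 ≤ n - 1) (hw : ShiftJoin t u w) (he : Edge k n w v) :
    w.1 = midWord t u v := by
  funext ⟨j, hj⟩
  by_cases hc : j + t < n - 1
  · rw [midWord_of_lt hc]
    exact hw.1 j hc
  · rw [midWord_of_not_lt hc (h' := by omega)]
    calc w.1 ⟨j, hj⟩ = w.1 ⟨j - 1 + 1, _⟩ := word_congr w.1 (by omega)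
      _ = v.1 ⟨j - 1, _⟩ := (he.1 (j - 1) (by omega)).symm

theorem existsUnique_shiftJoin_edge (ht : t + 1 ≤ n - 1) (hQ : ShiftJoin (t + 1) u v) :
    ∃! w, ShiftJoin t u w ∧ Edge k n w v :=
  ⟨_, ⟨shiftJoin_midWord ht hQ, edge_midWord ht hQ⟩,
    fun _ ⟨hw, he⟩ => Subtype.ext (eq_midWord ht hw he)⟩

end Vtx

open Vtx Classical in
theorem adjMat_pow_apply {k n t : ℕ} (ht : t ≤ n - 1) (u v : Vtx k n) :
    (AdjMat k n ^ t) u v = if ShiftJoin t u v then 1 else 0 := by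
  induction t generalizing v with
  | zero => simp only [pow_zero, Matrix.one_apply, shiftJoin_zero_iff]
  | succ t ih =>
    have hstep : ∀ w, (AdjMat k n ^ t) u w * AdjMat k n w v
        = if ShiftJoin t u w ∧ Edge k n w v then 1 else 0 := by
      intro w
      rw [ih (by omega), AdjMat, Matrix.of_apply, ite_zero_mul_ite_zero, one_mul]
    rw [pow_succ, Matrix.mul_apply, Finset.sum_congr rfl fun w _ => hstep w]
    by_cases hQ : ShiftJoin (t + 1) u v
    · obtain ⟨w₀, hw₀, huniq⟩ := existsUnique_shiftJoin_edge ht hQ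
      rw [if_pos hQ, Finset.sum_eq_single w₀ (fun w _ hw => if_neg (mt (huniq w) hw))
        (fun h => absurd (Finset.mem_univ w₀) h), if_pos hw₀]
    · rw [if_neg hQ]
      exact Finset.sum_eq_zero fun w _ => if_neg fun ⟨hw, he⟩ => hQ (hw.succ ht he)

/-- If the last letter of `u` differs from the first letter of `v`,
then `(A^(n-1))ᵤᵥ = 1` and `(A^(n-2))ᵤᵥ = 0`. -/
theorem stmt_0 (k n : ℕ) (hn : 2 ≤ n) (u v : Vtx k n)
    (h : u.1 ⟨n - 2, by omega⟩ ≠ v.1 ⟨0, by omega⟩) :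
    (AdjMat k n ^ (n - 1)) u v = 1 ∧ (AdjMat k n ^ (n - 2)) u v = 0 := by
  constructor
  · rw [adjMat_pow_apply le_rfl, if_pos]
    refine ⟨fun j hj => absurd hj (by omega), fun _ _ hc => h ?_⟩
    exact hc.trans (word_congr v.1 (by omega))
  · rw [adjMat_pow_apply (by omega), if_neg]
    rintro ⟨hshift, -⟩
    exact h ((word_congr u.1 (by omega)).trans (hshift 0 (by omega)).symm)
end

section
/- Let k ≥ 2 and n ≥ 2. The corresponding graph G_k^n is strongly connected: for any two vertices u and v of G_k^n, the vertex v is reachable from u, i.e., the pair (u,v) lies in the reflexive-transitive closure of the directed edge relation of G_k^n. -/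
/-!
The windows of length `n - 1` of an adjacency-hopping sequence, slid one letter at a time,
form a walk in `G_k^n`. If the last letter of `u` differs from the first letter of `v`, the
word `u v` is adjacency-hopping and its windows lead from `u` to `v`. Otherwise, one first
moves from `u` along an edge (one exists as `k ≥ 2`): this changes the last letter, so the first case applies.
-/

def IsAdjHopSeq (k N : ℕ) (s : ℕ → Fin k) : Prop :=
  ∀ j, j + 1 < N → s j ≠ s (j + 1)

def window {α : Type*} (s : ℕ → α) (L i : ℕ) : Fin L → α := fun j => s (i + j)

def prepend {α : Type*} {L : ℕ} (u : Fin L → α) (t : ℕ → α) : ℕ → α :=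
  fun j => if h : j < L then u ⟨j, h⟩ else t (j - L)

section Windows

variable {α : Type*} {L : ℕ} (u : Fin L → α) (t : ℕ → α)

lemma window_prepend_zero : window (prepend u t) L 0 = u := by
  funext j
  simp [window, prepend]

lemma window_prepend_self (M : ℕ) : window (prepend u t) M L = window t M 0 := by
  funext j
  simp [window, prepend]

end Windows

section AdjHop

variable {k N L : ℕ} {s : ℕ → Fin k}

lemma IsAdjHopSeq.isAdjHop_window (hs : IsAdjHopSeq k N s) {i : ℕ} (hi : i + L ≤ N) :
    IsAdjHop k L (window s L i) :=
  fun j hj => hs (i + j) (by omega)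

lemma isAdjHopSeq_prepend {u : Fin L → Fin k} (hu : IsAdjHop k L u) (t : ℕ → Fin k) :
    IsAdjHopSeq k L (prepend u t) := by
  intro j hj
  simpa [prepend, show j < L by omega, hj] using hu j hj

lemma IsAdjHopSeq.prepend {M : ℕ} {t : ℕ → Fin k} (ht : IsAdjHopSeq k M t)
    {u : Fin L → Fin k} (hu : IsAdjHop k L u) (hL : 0 < L) (hut : u ⟨L - 1, by omega⟩ ≠ t 0) :
    IsAdjHopSeq k (L + M) (prepend u t) := by
  intro j hj
  rcases lt_trichotomy (j + 1) L with hjL | hjL | hjL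
  · exact isAdjHopSeq_prepend hu t j hjL
  · obtain rfl : j = L - 1 := by omega
    simpa [_root_.prepend, hL, hjL] using hut
  · simpa [_root_.prepend, show ¬ j < L by omega, show ¬ j + 1 < L by omega, show j + 1 - L = j - L + 1 by omega]
      using ht (j - L) (by omega)

end AdjHop

section Walks

variable {k N : ℕ} {s : ℕ → Fin k} (hs : IsAdjHopSeq k N s) (n : ℕ)

def windowVtx (i : ℕ) (hi : i + (n - 1) ≤ N) : Vtx k n :=
  ⟨window s (n - 1) i, hs.isAdjHop_window hi⟩

lemma edge_windowVtx (i : ℕ) (hi : i + 1 + (n - 1) ≤ N) :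
    Edge k n (windowVtx hs n i (by omega)) (windowVtx hs n (i + 1) hi) := by
  refine ⟨fun j _ => ?_, fun _ => ?_⟩
  · simp only [windowVtx, window, Nat.add_right_comm i 1 j, add_assoc]
  · simpa [windowVtx, window, Nat.add_right_comm i 1, add_assoc] using hs (i + (n - 2)) (by omega)

lemma reflTransGen_windowVtx (i : ℕ) (hi : i + (n - 1) ≤ N) :
    Relation.ReflTransGen (Edge k n) (windowVtx hs n 0 (by omega)) (windowVtx hs n i hi) := by
  induction i with
  | zero => rfl
  | succ i ih => exact (ih (by omega)).tail (edge_windowVtx hs n i hi)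

end Walks

section Graph

variable {k n : ℕ}

lemma windowVtx_prepend_zero (u : Vtx k n) (t : ℕ → Fin k) {N : ℕ}
    (hs : IsAdjHopSeq k N (prepend u.1 t)) (h : 0 + (n - 1) ≤ N) :
    windowVtx hs n 0 h = u :=
  Subtype.ext (window_prepend_zero u.1 t)

lemma exists_edge (hk : 2 ≤ k) (hn : 2 ≤ n) (u : Vtx k n) : ∃ w, Edge k n u w := by
  have : Nontrivial (Fin k) := Fin.nontrivial_iff_two_le.mpr hk
  obtain ⟨c, hc⟩ := exists_ne (u.1 ⟨n - 1 - 1, by omega⟩)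
  have hs : IsAdjHopSeq k (n - 1 + 1) (prepend u.1 fun _ => c) :=
    IsAdjHopSeq.prepend (fun _ h => absurd h (by omega)) u.2 (by omega) hc.symm
  refine ⟨windowVtx hs n 1 (by omega), ?_⟩
  simpa only [windowVtx_prepend_zero] using edge_windowVtx hs n 0 (by omega)

lemma reflTransGen_edge_of_last_ne_head (hn : 2 ≤ n) (u v : Vtx k n)
    (huv : u.1 ⟨n - 2, by omega⟩ ≠ v.1 ⟨0, by omega⟩) :
    Relation.ReflTransGen (Edge k n) u v := by
  let t := prepend v.1 fun _ => v.1 ⟨0, by omega⟩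
  have hs : IsAdjHopSeq k (n - 1 + (n - 1)) (prepend u.1 t) :=
    (isAdjHopSeq_prepend v.2 _).prepend u.2 (by omega) (by simpa [t, prepend, show 1 < n by omega, Nat.sub_sub] using huv)
  have hv : windowVtx hs n (n - 1) le_rfl = v := by
    refine Subtype.ext ?_
    simp only [windowVtx, window_prepend_self, t, window_prepend_zero]
  simpa only [windowVtx_prepend_zero, hv] using reflTransGen_windowVtx hs n (n - 1) le_rfl

end Graph

/-- `G_k^n` is strongly connected. -/
theorem stmt_3 (k n : ℕ) (hk : 2 ≤ k) (hn : 2 ≤ n) (u v : Vtx k n) :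
    Relation.ReflTransGen (Edge k n) u v := by
  by_cases huv : u.1 ⟨n - 2, by omega⟩ = v.1 ⟨0, by omega⟩
  · obtain ⟨w, huw⟩ := exists_edge hk hn u
    exact .head huw <| reflTransGen_edge_of_last_ne_head hn w v <| huv ▸ (huw.2 (by omega)).symm
  · exact reflTransGen_edge_of_last_ne_head hn u v huv
end

section
/- Let k ≥ 2 and n ≥ 2. The corresponding graph G_k^n is balanced with all degrees equal to k-1: for every vertex u of G_k^n, the number of vertices v such that there is an edge from u to v equals k-1, and the number of vertices v such that there is an edge from v to u also equals k-1. -/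
/-!
An edge `u → v` of `G_k^n` is the same thing as an adjacency-hopping word of length `n` with
prefix `u` and suffix `v`. So an out-neighbour of `u` is `u` shifted left with a letter `c`
appended, `c` ranging over the `k - 1` letters other than the last letter of `u`; dually, an
in-neighbour of `u` is `u` shifted right with a letter `c ≠ u 0` prepended.
-/

open Fin

namespace Fin

variable {α : Type*} {m : ℕ}

theorem tail_snoc_eq_of_init_eq_tail {u v : Fin (m + 1) → α} (h : init v = tail u) :
    tail (snoc (α := fun _ ↦ α) u (v (last m))) = v := by
  funext i
  induction i using lastCases with
  | last => simp only [tail, succ_last, snoc_last]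
  | cast j =>
    simp only [tail, succ_castSucc, snoc_castSucc]
    exact (congrFun h j).symm

theorem init_cons_eq_of_tail_eq_init {u v : Fin (m + 1) → α} (h : tail v = init u) :
    init (cons (α := fun _ ↦ α) (v 0) u) = v := by
  funext i
  induction i using cases with
  | zero => simp only [init, castSucc_zero, cons_zero]
  | succ j =>
    simp only [init, ← succ_castSucc, cons_succ]
    exact (congrFun h j).symm

end Fin

section Words

variable {k m : ℕ}

theorem isAdjHop_succ_iff {w : Fin (m + 1) → Fin k} :
    IsAdjHop k (m + 1) w ↔ ∀ i : Fin m, w i.castSucc ≠ w i.succ :=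
  ⟨fun h i => h i i.succ.isLt, fun h i hi => h ⟨i, by omega⟩⟩

theorem IsAdjHop.tail {w : Fin (m + 2) → Fin k} (h : IsAdjHop k (m + 2) w) :
    IsAdjHop k (m + 1) (Fin.tail w) := by
  rw [isAdjHop_succ_iff] at h ⊢
  intro i
  simpa only [Fin.tail, ← succ_castSucc] using h i.succ

theorem IsAdjHop.init {w : Fin (m + 2) → Fin k} (h : IsAdjHop k (m + 2) w) :
    IsAdjHop k (m + 1) (Fin.init w) := by
  rw [isAdjHop_succ_iff] at h ⊢
  intro i
  simpa only [Fin.init, succ_castSucc] using h i.castSucc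

theorem isAdjHop_snoc_iff {w : Fin (m + 1) → Fin k} {c : Fin k} :
    IsAdjHop k (m + 2) (snoc w c) ↔ IsAdjHop k (m + 1) w ∧ w (last m) ≠ c := by
  simp only [isAdjHop_succ_iff, forall_fin_succ' (n := m), succ_castSucc, snoc_castSucc,
    succ_last, snoc_last]

theorem isAdjHop_cons_iff {w : Fin (m + 1) → Fin k} {c : Fin k} :
    IsAdjHop k (m + 2) (cons c w) ↔ c ≠ w 0 ∧ IsAdjHop k (m + 1) w := by
  simp only [isAdjHop_succ_iff, forall_fin_succ (n := m), ← succ_castSucc, cons_succ,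
    castSucc_zero, cons_zero]

end Words

section Neighbors

variable {k m : ℕ}

-- The words in `Vtx k (m + 2)` have length `m + 2 - 1`, which is `m + 1` only definitionally.
theorem edge_iff {u v : Vtx k (m + 2)} :
    Edge k (m + 2) u v ↔ init v.1 = tail u.1 ∧ u.1 (last m) ≠ v.1 (last m) :=
  and_congr ⟨fun h => funext fun j => h j j.isLt, fun h j hj => congrFun h ⟨j, by omega⟩⟩
    ⟨fun h => h (by omega), fun h _ => h⟩

-- `snoc u (v last) = cons (u 0) v` is an adjacency-hopping word.
theorem Edge.head_ne {u v : Vtx k (m + 2)} (h : Edge k (m + 2) u v) :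
    u.1 (0 : Fin (m + 1)) ≠ v.1 (0 : Fin (m + 1)) := by
  obtain ⟨hinit, hlast⟩ := edge_iff.1 h
  have hword : IsAdjHop k (m + 2) (snoc u.1 (v.1 (last m))) := isAdjHop_snoc_iff.2 ⟨u.2, hlast⟩
  rw [← cons_self_tail (snoc _ _), tail_snoc_eq_of_init_eq_tail hinit] at hword
  exact (isAdjHop_cons_iff.1 hword).1

def outNeighborsEquiv (u : Vtx k (m + 2)) :
    {v : Vtx k (m + 2) // Edge k (m + 2) u v} ≃ {c : Fin k // c ≠ u.1 (last m)} where
  toFun v := ⟨v.1.1 (last m), (edge_iff.1 v.2).2.symm⟩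
  invFun c :=
    ⟨⟨tail (snoc (α := fun _ ↦ Fin k) u.1 c.1), (isAdjHop_snoc_iff.2 ⟨u.2, c.2.symm⟩).tail⟩,
      edge_iff.2 ⟨by rw [← tail_init_eq_init_tail, init_snoc], by simpa [tail] using c.2.symm⟩⟩
  left_inv v := by
    ext : 2
    exact tail_snoc_eq_of_init_eq_tail (edge_iff.1 v.2).1
  right_inv c := by
    ext
    simp [tail]

def inNeighborsEquiv (u : Vtx k (m + 2)) :
    {v : Vtx k (m + 2) // Edge k (m + 2) v u} ≃ {c : Fin k // c ≠ u.1 (0 : Fin (m + 1))} where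
  toFun v := ⟨v.1.1 (0 : Fin (m + 1)), v.2.head_ne⟩
  invFun c :=
    ⟨⟨init (cons (α := fun _ ↦ Fin k) c.1 u.1), (isAdjHop_cons_iff.2 ⟨c.2, u.2⟩).init⟩,
      edge_iff.2 ⟨by rw [tail_init_eq_init_tail, tail_cons],
        isAdjHop_succ_iff.1 (isAdjHop_cons_iff.2 ⟨c.2, u.2⟩) (last m)⟩⟩
  left_inv v := by
    ext : 2
    exact init_cons_eq_of_tail_eq_init (edge_iff.1 v.2).1.symm
  right_inv c := by
    ext
    simp [init]

end Neighbors

theorem stmt_4_general (k n : ℕ) (hn : 2 ≤ n) (u : Vtx k n) :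
    Nat.card {v : Vtx k n // Edge k n u v} = k - 1 ∧
      Nat.card {v : Vtx k n // Edge k n v u} = k - 1 := by
  obtain ⟨m, rfl⟩ : ∃ m, n = m + 2 := ⟨n - 2, by omega⟩
  rw [Nat.card_congr (outNeighborsEquiv u), Nat.card_congr (inNeighborsEquiv u)]
  simp [Nat.card_eq_fintype_card]

/-- Every vertex of `G_k^n` has outdegree `k - 1` and indegree `k - 1`. -/
theorem stmt_4 (k n : ℕ) (hk : 2 ≤ k) (hn : 2 ≤ n) (u : Vtx k n) :
    Nat.card {v : Vtx k n // Edge k n u v} = k - 1 ∧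
      Nat.card {v : Vtx k n // Edge k n v u} = k - 1 :=
  stmt_4_general k n hn u
end
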